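/- Let E = Σ_{i=1}^r p_i E_{A,i} ⊗ E_{B,i} be a separable bipartite channel with local unital blocks T_A^i, T_B^i. Then the correlated unitarity satisfies u_c(E) = α_A α_B ( Σ_{i,j} p_i p_j ⟨T_A^i, T_A^j⟩⟨T_B^i, T_B^j⟩ − (Σ_{i,j} p_i p_j ⟨T_A^i, T_A^j⟩)(Σ_{m,n} p_m p_n ⟨T_B^m, T_B^n⟩) ), where ⟨S,T⟩ = tr[S†T], α_A = 1/(d_A²−1), α_B = 1/(d_B²−1). -/

import Mathlib

open Matrix Kronecker

lemma trace_conjTranspose_sum_smul_mul_sum_smul {ι m : Type*} [Fintype ι] [Fintype m]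
    (c : ι → ℝ) (M : ι → Matrix m m ℂ) :
    ((∑ i, (c i : ℂ) • M i)ᴴ * (∑ j, (c j : ℂ) • M j)).trace
      = ∑ i, ∑ j, (c i : ℂ) * (c j : ℂ) * ((M i)ᴴ * M j).trace := by
  simp only [conjTranspose_sum, conjTranspose_smul, Complex.star_def, Complex.conj_ofReal,
    Finset.sum_mul, Finset.mul_sum, Matrix.smul_mul, Matrix.mul_smul, trace_sum, trace_smul,
    smul_eq_mul, mul_assoc]
  rw [Finset.sum_comm]
  exact Finset.sum_congr rfl fun i _ => Finset.sum_congr rfl fun j _ => mul_left_comm _ _ _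

lemma trace_conjTranspose_kronecker_mul_kronecker {R l m n p : Type*} [CommSemiring R]
    [StarRing R] [Fintype l] [Fintype m] [Fintype n] [Fintype p]
    (A C : Matrix l m R) (B D : Matrix n p R) :
    ((A ⊗ₖ B)ᴴ * (C ⊗ₖ D)).trace = (Aᴴ * C).trace * (Bᴴ * D).trace := by
  rw [conjTranspose_kronecker, ← mul_kronecker_mul, trace_kronecker]

theorem correlated_unitarity_separable_decomposition_general {dA dB r : ℕ}
    (p : Fin r → ℝ)
    (TA : Fin r → Matrix (Fin (dA ^ 2 - 1)) (Fin (dA ^ 2 - 1)) ℂ)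
    (TB : Fin r → Matrix (Fin (dB ^ 2 - 1)) (Fin (dB ^ 2 - 1)) ℂ) :
    ((1 : ℂ) / ((dA : ℂ) ^ 2 - 1)) * ((1 : ℂ) / ((dB : ℂ) ^ 2 - 1)) *
      (((∑ i, (p i : ℂ) • (TA i ⊗ₖ TB i))ᴴ * (∑ i, (p i : ℂ) • (TA i ⊗ₖ TB i))).trace
        - ((∑ i, (p i : ℂ) • TA i)ᴴ * (∑ i, (p i : ℂ) • TA i)).trace *
          ((∑ i, (p i : ℂ) • TB i)ᴴ * (∑ i, (p i : ℂ) • TB i)).trace)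
    =
    ((1 : ℂ) / ((dA : ℂ) ^ 2 - 1)) * ((1 : ℂ) / ((dB : ℂ) ^ 2 - 1)) *
      ((∑ i, ∑ j, (p i : ℂ) * (p j : ℂ) *
          ((TA i)ᴴ * TA j).trace * ((TB i)ᴴ * TB j).trace)
        - (∑ i, ∑ j, (p i : ℂ) * (p j : ℂ) * ((TA i)ᴴ * TA j).trace) *
          (∑ m, ∑ n, (p m : ℂ) * (p n : ℂ) * ((TB m)ᴴ * TB n).trace)) := by
  simp only [trace_conjTranspose_sum_smul_mul_sum_smul,
    trace_conjTranspose_kronecker_mul_kronecker, mul_assoc]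

/-- For a separable bipartite channel `E = Σ_i p_i E_{A,i} ⊗ E_{B,i}` whose Liouville
blocks satisfy `T_{AB→AB} = Σ_i p_i T_A^i ⊗ T_B^i`, `T_{A→A} = Σ_i p_i T_A^i`,
`T_{B→B} = Σ_i p_i T_B^i`, the correlated unitarity
`u_c(E) = α_A α_B (tr[T_{AB→AB}†T_{AB→AB}] − tr[T_{A→A}†T_{A→A}]·tr[T_{B→B}†T_{B→B}])`
decomposes as
`u_c(E) = α_A α_B ( Σ_{i,j} p_i p_j ⟨T_A^i,T_A^j⟩⟨T_B^i,T_B^j⟩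
  − (Σ_{i,j} p_i p_j ⟨T_A^i,T_A^j⟩)(Σ_{m,n} p_m p_n ⟨T_B^m,T_B^n⟩) )`. -/
theorem correlated_unitarity_separable_decomposition {dA dB r : ℕ}
    (p : Fin r → ℝ) (hp0 : ∀ i, 0 ≤ p i) (hp1 : ∑ i, p i = 1)
    (TA : Fin r → Matrix (Fin (dA ^ 2 - 1)) (Fin (dA ^ 2 - 1)) ℂ)
    (TB : Fin r → Matrix (Fin (dB ^ 2 - 1)) (Fin (dB ^ 2 - 1)) ℂ) :
    ((1 : ℂ) / ((dA : ℂ) ^ 2 - 1)) * ((1 : ℂ) / ((dB : ℂ) ^ 2 - 1)) *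
      (((∑ i, (p i : ℂ) • (TA i ⊗ₖ TB i))ᴴ * (∑ i, (p i : ℂ) • (TA i ⊗ₖ TB i))).trace
        - ((∑ i, (p i : ℂ) • TA i)ᴴ * (∑ i, (p i : ℂ) • TA i)).trace *
          ((∑ i, (p i : ℂ) • TB i)ᴴ * (∑ i, (p i : ℂ) • TB i)).trace)
    =
    ((1 : ℂ) / ((dA : ℂ) ^ 2 - 1)) * ((1 : ℂ) / ((dB : ℂ) ^ 2 - 1)) *
      ((∑ i, ∑ j, (p i : ℂ) * (p j : ℂ) *
          ((TA i)ᴴ * TA j).trace * ((TB i)ᴴ * TB j).trace)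
        - (∑ i, ∑ j, (p i : ℂ) * (p j : ℂ) * ((TA i)ᴴ * TA j).trace) *
          (∑ m, ∑ n, (p m : ℂ) * (p n : ℂ) * ((TB m)ᴴ * TB n).trace)) :=
  correlated_unitarity_separable_decomposition_general p TA TB
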